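/- For each m ∈ {1,2}, if z ∈ C³ with ‖z‖ = 1 and |z₂|² + |z₃|² = ε, let z' = (ω⁻ᵏz₁, ω^{−k+1}z₂, ω^{−k+2}z₃) for k ∈ {0,1,2} with ω = e^{2πi/3}. Then Θ₁(z') = Θ₁(z)·diag(1, ω, ω²), where Θ₁ is the glueing matrix defined above. -/

import Mathlib

/-! The twist `z ↦ z'` is multiplication by the unit scalar `ω⁻ᵏ`, which `Θ₁` does not see since
its entries are of the form `z̄ᵢ zⱼ`, followed by `(z₁, z₂, z₃) ↦ (z₁, ω z₂, ω² z₃)`. The latter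
multiplies the lower `2 × 2` block of `Θ₁` entrywise by `ω, ω², ω̄² = ω, ω̄ = ω²`, i.e. scales its
columns by `ω` and `ω²`. -/

open Complex Matrix

noncomputable def Θ₁ (ε : ℝ) (z : Fin 3 → ℂ) : Matrix (Fin 3) (Fin 3) ℂ :=
  ((Real.sqrt (ε * (1 - ε)) : ℂ)⁻¹) •
    !![(Real.sqrt (ε * (1 - ε)) : ℂ), 0, 0;
       0, (starRingEnd ℂ) (z 0) * z 1, -((starRingEnd ℂ) (z 0) * z 2);
       0, z 0 * (starRingEnd ℂ) (z 2), z 0 * (starRingEnd ℂ) (z 1)]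

noncomputable def Θ₂ (ε : ℝ) (z : Fin 3 → ℂ) : Matrix (Fin 3) (Fin 3) ℂ :=
  ((Real.sqrt (ε * (1 - ε)) : ℂ)⁻¹) •
    !![(starRingEnd ℂ) (z 0) * z 1, -(z 0 * (starRingEnd ℂ) (z 2)), 0;
       (starRingEnd ℂ) (z 0) * z 2, z 0 * (starRingEnd ℂ) (z 1), 0;
       0, 0, (Real.sqrt (ε * (1 - ε)) : ℂ)]


noncomputable def ω : ℂ := Complex.exp (2 * Real.pi * Complex.I / 3)

theorem ω_pow_three : ω ^ 3 = 1 := by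
  simpa [ω] using (isPrimitiveRoot_exp 3 three_ne_zero).pow_eq_one

theorem conj_eq_pow_pred_of_pow_eq_one {u : ℂ} {n : ℕ} (hu : u ^ n = 1) (hn : n ≠ 0) :
    (starRingEnd ℂ) u = u ^ (n - 1) := by
  rw [← inv_eq_conj (norm_eq_one_of_pow_eq_one hu hn)]
  refine inv_eq_of_mul_eq_one_right ?_
  rw [← pow_succ', Nat.sub_add_cancel (Nat.one_le_iff_ne_zero.mpr hn), hu]

theorem Θ₁_smul_of_norm_eq_one (ε : ℝ) (z : Fin 3 → ℂ) {c : ℂ} (hc : ‖c‖ = 1) :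
    Θ₁ ε (c • z) = Θ₁ ε z := by
  have hc' : (starRingEnd ℂ) c * c = 1 := by simp [conj_mul', hc]
  have conj_mul_mul (a b : ℂ) : (starRingEnd ℂ) (c * a) * (c * b) = (starRingEnd ℂ) a * b := by
    rw [map_mul]; linear_combination (starRingEnd ℂ) a * b * hc'
  have mul_mul_conj (a b : ℂ) : c * a * (starRingEnd ℂ) (c * b) = a * (starRingEnd ℂ) b := by
    rw [map_mul]; linear_combination a * (starRingEnd ℂ) b * hc'
  simp only [Θ₁, Pi.smul_apply, smul_eq_mul, conj_mul_mul, mul_mul_conj]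

theorem Θ₁_twist_of_pow_three_eq_one (ε : ℝ) (z : Fin 3 → ℂ) {u : ℂ} (hu : u ^ 3 = 1) :
    Θ₁ ε ![z 0, u * z 1, u ^ 2 * z 2] = Θ₁ ε z * !![1, 0, 0; 0, u, 0; 0, 0, u ^ 2] := by
  have hconj := conj_eq_pow_pred_of_pow_eq_one hu three_ne_zero
  have hu4 : (u ^ 2) ^ 2 = u := by linear_combination u * hu
  rw [← diagonal_vec3]
  ext i j
  fin_cases i <;> fin_cases j <;>
    simp [Θ₁, mul_diagonal, hconj, hu4, mul_assoc, mul_comm, mul_left_comm]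

theorem Theta₁_twist_general (ε : ℝ)
    (z : Fin 3 → ℂ)
    (k : ℕ) :
    Θ₁ ε ![ω ^ (-(k : ℤ)) * z 0, ω ^ (1 - (k : ℤ)) * z 1, ω ^ (2 - (k : ℤ)) * z 2] =
      Θ₁ ε z * !![1, 0, 0; 0, ω, 0; 0, 0, ω ^ 2] := by
  have hω : ω ≠ 0 := exp_ne_zero _
  have hω₁ : ω ^ (1 - (k : ℤ)) = ω ^ (-(k : ℤ)) * ω := by
    rw [← zpow_add_one₀ hω]; ring_nf
  have hω₂ : ω ^ (2 - (k : ℤ)) = ω ^ (-(k : ℤ)) * ω ^ 2 := by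
    rw [← zpow_natCast, ← zpow_add₀ hω]; ring_nf
  have hunit : ‖ω ^ (-(k : ℤ))‖ = 1 := by
    rw [norm_zpow, norm_eq_one_of_pow_eq_one ω_pow_three three_ne_zero, _root_.one_zpow]
  have htwist : ![ω ^ (-(k : ℤ)) * z 0, ω ^ (1 - (k : ℤ)) * z 1, ω ^ (2 - (k : ℤ)) * z 2] =
      ω ^ (-(k : ℤ)) • ![z 0, ω * z 1, ω ^ 2 * z 2] := by
    ext i; fin_cases i <;> simp [hω₁, hω₂, mul_assoc]
  rw [htwist, Θ₁_smul_of_norm_eq_one _ _ hunit, Θ₁_twist_of_pow_three_eq_one _ _ ω_pow_three]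

theorem Theta₁_twist (ε : ℝ) (hε : 0 < ε) (hε' : ε < 1 / 9)
    (z : Fin 3 → ℂ) (hz : (∑ i, ‖z i‖ ^ 2) = 1) (hz' : ‖z 1‖ ^ 2 + ‖z 2‖ ^ 2 = ε)
    (k : ℕ) (hk : k ≤ 2) :
    Θ₁ ε ![ω ^ (-(k : ℤ)) * z 0, ω ^ (1 - (k : ℤ)) * z 1, ω ^ (2 - (k : ℤ)) * z 2] =
      Θ₁ ε z * !![1, 0, 0; 0, ω, 0; 0, 0, ω ^ 2] :=
  Theta₁_twist_general ε z k
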